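/- arXiv:2310.01710 — 11 statements merged into one kernel-verified Lean document; each statement's English description precedes it below -/
import Mathlib

section
/- Let $(\mathcal{L},\lhd,\rhd)$ be a Leibniz-dendriform algebra. Then the bracket $[x,y] = x\lhd y + x\rhd y$ defines a Leibniz algebra structure on $\mathcal{L}$. -/
/-- The sub-adjacent bracket of a Leibniz-dendriform algebra is a Leibniz bracket. -/
theorem stmt0 {K : Type*} [Field K] {L : Type*} [AddCommGroup L] [Module K L]
    (lhd rhd : L →ₗ[K] L →ₗ[K] L)
    (h1 : ∀ x y z : L, lhd (lhd x y) z = lhd x (lhd y z) - lhd y (lhd x z) - lhd (rhd x y) z)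
    (h2 : ∀ x y z : L, lhd x (rhd y z) = rhd (lhd x y) z + rhd y (lhd x z) + rhd y (rhd x z))
    (h3 : ∀ x y z : L, rhd x (rhd y z) = rhd (rhd x y) z + lhd y (rhd x z) - rhd x (lhd y z))
    (br : L →ₗ[K] L →ₗ[K] L)
    (hbr : ∀ x y : L, br x y = lhd x y + rhd x y) :
    ∀ x y z : L, br x (br y z) = br (br x y) z + br y (br x z) := by
  intro x y z
  simp only [hbr, map_add, LinearMap.add_apply]
  rw [h1 x y z, h2 x y z, h3 x y z]
  abel
end

section
/- Let $V$ be a vector space. Define on $\mathfrak{gl}(V)\oplus V$ the operations $(A+u)\lhd(B+v) = AB + Av$ and $(A+u)\rhd(B+v) = -BA$. Then $(\mathfrak{gl}(V)\oplus V, \lhd, \rhd)$ is a Leibniz-dendriform algebra. -/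
/-- gl(V) ⊕ V with (A+u)◁(B+v) = AB + Av and (A+u)▷(B+v) = -BA is a
Leibniz-dendriform algebra. -/
theorem stmt1 {K : Type*} [Field K] {V : Type*} [AddCommGroup V] [Module K V]
    (lhd rhd : (Module.End K V × V) → (Module.End K V × V) → (Module.End K V × V))
    (hlhd : ∀ (A B : Module.End K V) (u v : V), lhd (A, u) (B, v) = (A * B, A v))
    (hrhd : ∀ (A B : Module.End K V) (u v : V), rhd (A, u) (B, v) = (-(B * A), 0)) :
    (∀ x y z, lhd (lhd x y) z = lhd x (lhd y z) - lhd y (lhd x z) - lhd (rhd x y) z) ∧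
    (∀ x y z, lhd x (rhd y z) = rhd (lhd x y) z + rhd y (lhd x z) + rhd y (rhd x z)) ∧
    (∀ x y z, rhd x (rhd y z) = rhd (rhd x y) z + lhd y (rhd x z) - rhd x (lhd y z)) := by
  refine ⟨?_, ?_, ?_⟩ <;>
  · rintro ⟨A, u⟩ ⟨B, v⟩ ⟨C, w⟩
    simp only [hlhd, hrhd, Prod.mk_sub_mk, Prod.mk_add_mk, Prod.mk.injEq]
    constructor <;> [noncomm_ring; simp [Module.End.mul_apply]]
end

section
/- Let $T:\mathcal{V}\to\mathcal{E}$ be a relative Rota-Baxter operator on a Leibniz algebra $(\mathcal{E},[\cdot,\cdot])$ with respect to a representation $(\mathcal{V};l,r)$. Then the operations $u\lhd v = l(Tu)v$ and $u\rhd v = r(Tv)u$ define a Leibniz-dendriform algebra structure on $\mathcal{V}$, and $T$ is a homomorphism of Leibniz algebras from $(\mathcal{V}, [u,v] = u\lhd v + u\rhd v)$ to $(\mathcal{E},[\cdot,\cdot])$. -/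
/-- A relative Rota-Baxter operator induces a Leibniz-dendriform algebra
structure on the representation space, and T is a homomorphism of Leibniz
algebras from the sub-adjacent Leibniz algebra to the original one. -/
theorem stmt4 {K E V : Type*} [Field K] [AddCommGroup E] [Module K E]
    [AddCommGroup V] [Module K V]
    (br : E →ₗ[K] E →ₗ[K] E)
    (hbr : ∀ x y z : E, br x (br y z) = br (br x y) z + br y (br x z))
    (l r : E →ₗ[K] Module.End K V)
    (hl : ∀ x y : E, l (br x y) = l x * l y - l y * l x)
    (hr : ∀ x y : E, r (br x y) = l x * r y - r y * l x)
    (hrl : ∀ (x y : E) (v : V), r y (l x v) = -(r y (r x v)))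
    (T : V →ₗ[K] E)
    (hT : ∀ u v : V, br (T u) (T v) = T (l (T u) v + r (T v) u))
    (lhd rhd : V → V → V)
    (hlhd : ∀ u v : V, lhd u v = l (T u) v)
    (hrhd : ∀ u v : V, rhd u v = r (T v) u) :
    (∀ x y z, lhd (lhd x y) z = lhd x (lhd y z) - lhd y (lhd x z) - lhd (rhd x y) z) ∧
    (∀ x y z, lhd x (rhd y z) = rhd (lhd x y) z + rhd y (lhd x z) + rhd y (rhd x z)) ∧
    (∀ x y z, rhd x (rhd y z) = rhd (rhd x y) z + lhd y (rhd x z) - rhd x (lhd y z)) ∧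
    (∀ u v : V, T (lhd u v + rhd u v) = br (T u) (T v)) := by
  have key : ∀ u v : V, T (l (T u) v) = br (T u) (T v) - T (r (T v) u) := by
    intro u v
    rw [hT, map_add]; abel
  refine ⟨?_, ?_, ?_, fun u v => ?_⟩
  · intro x y z
    simp only [hlhd, hrhd]
    rw [key, map_sub, LinearMap.sub_apply, hl, LinearMap.sub_apply,
      Module.End.mul_apply, Module.End.mul_apply]
  · intro x y z
    simp only [hlhd, hrhd]
    have h2 := hr (T x) (T z)
    rw [hT] at h2
    have h3 := congrArg (fun f => f y) h2
    simp only [map_add, LinearMap.add_apply, LinearMap.sub_apply,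
      Module.End.mul_apply] at h3
    linear_combination (norm := abel) -h3
  · intro x y z
    simp only [hlhd, hrhd]
    have h2 := hr (T y) (T z)
    rw [hT] at h2
    have h3 := congrArg (fun f => f x) h2
    simp only [map_add, LinearMap.add_apply, LinearMap.sub_apply,
      Module.End.mul_apply] at h3
    have h4 := hrl (T y) (T z) x
    linear_combination (norm := abel) h3 - h4
  · rw [hlhd, hrhd, ← hT]
end

section
/- Let $(\mathcal{L},\lhd,\rhd,\mathcal{B})$ be a quadratic Leibniz-dendriform algebra. Then the sub-adjacent Leibniz algebra $(\mathcal{L},[\cdot,\cdot]_{\lhd,\rhd})$ together with $\mathcal{B}$ is a symplectic Leibniz algebra, i.e. $\mathcal{B}(z,[x,y]) = -\mathcal{B}(y,[x,z]) + \mathcal{B}(x,[y,z]) + \mathcal{B}(x,[z,y])$ for all $x,y,z$. -/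
/-- A quadratic Leibniz-dendriform algebra gives rise to a symplectic Leibniz
algebra via the sub-adjacent bracket. -/
theorem stmt5 {K L : Type*} [Field K] [AddCommGroup L] [Module K L]
    (lhd rhd : L →ₗ[K] L →ₗ[K] L)
    (h1 : ∀ x y z : L, lhd (lhd x y) z = lhd x (lhd y z) - lhd y (lhd x z) - lhd (rhd x y) z)
    (h2 : ∀ x y z : L, lhd x (rhd y z) = rhd (lhd x y) z + rhd y (lhd x z) + rhd y (rhd x z))
    (h3 : ∀ x y z : L, rhd x (rhd y z) = rhd (rhd x y) z + lhd y (rhd x z) - rhd x (lhd y z))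
    (br : L →ₗ[K] L →ₗ[K] L)
    (hbr : ∀ x y : L, br x y = lhd x y + rhd x y)
    (B : L →ₗ[K] L →ₗ[K] K)
    (hsym : ∀ x y : L, B x y = B y x)
    (hnd : ∀ x : L, (∀ y : L, B x y = 0) → x = 0)
    (hinv1 : ∀ x y z : L, B (lhd x y) z = -B y (br x z))
    (hinv2 : ∀ x y z : L, B (rhd x y) z = B x (br y z) + B x (br z y)) :
    (∀ x y z : L, br x (br y z) = br (br x y) z + br y (br x z)) ∧
    (∀ x y z : L, B z (br x y) = -B y (br x z) + B x (br y z) + B x (br z y)) := by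
  constructor
  · intro x y z
    simp only [hbr, map_add, LinearMap.add_apply]
    rw [h1 x y z, h2 x y z, h3 x y z]
    abel
  · intro x y z
    rw [hsym z (br x y), hbr x y, map_add, LinearMap.add_apply, hinv1, hinv2]
    ring
end

section
/- Let $(\mathcal{E},[\cdot,\cdot],\mathcal{B})$ be a symplectic Leibniz algebra. Define $\lhd$ and $\rhd$ on $\mathcal{E}$ by $\mathcal{B}(x\lhd y, z) = -\mathcal{B}(y,[x,z])$ and $\mathcal{B}(x\rhd y, z) = \mathcal{B}(x,[y,z]) + \mathcal{B}(x,[z,y])$. Then $(\mathcal{E},\lhd,\rhd)$ is a Leibniz-dendriform algebra compatible with $[\cdot,\cdot]$, i.e. $x\lhd y + x\rhd y = [x,y]$. -/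
/-- A symplectic Leibniz algebra carries a compatible Leibniz-dendriform
algebra structure defined via the symplectic form. -/
theorem stmt6 {K E : Type*} [Field K] [AddCommGroup E] [Module K E]
    (br : E →ₗ[K] E →ₗ[K] E)
    (hbr : ∀ x y z : E, br x (br y z) = br (br x y) z + br y (br x z))
    (B : E →ₗ[K] E →ₗ[K] K)
    (hsym : ∀ x y : E, B x y = B y x)
    (hnd : ∀ x : E, (∀ y : E, B x y = 0) → x = 0)
    (hsymp : ∀ x y z : E, B z (br x y) = -B y (br x z) + B x (br y z) + B x (br z y))
    (lhd rhd : E →ₗ[K] E →ₗ[K] E)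
    (hlhd : ∀ x y z : E, B (lhd x y) z = -B y (br x z))
    (hrhd : ∀ x y z : E, B (rhd x y) z = B x (br y z) + B x (br z y)) :
    (∀ x y z : E, lhd (lhd x y) z = lhd x (lhd y z) - lhd y (lhd x z) - lhd (rhd x y) z) ∧
    (∀ x y z : E, lhd x (rhd y z) = rhd (lhd x y) z + rhd y (lhd x z) + rhd y (rhd x z)) ∧
    (∀ x y z : E, rhd x (rhd y z) = rhd (rhd x y) z + lhd y (rhd x z) - rhd x (lhd y z)) ∧
    (∀ x y : E, lhd x y + rhd x y = br x y) := by
  -- extensionality via nondegeneracy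
  have ext : ∀ a b : E, (∀ w : E, B a w = B b w) → a = b := by
    intro a b h
    have h0 : ∀ w : E, B (a - b) w = 0 := by
      intro w
      rw [map_sub, LinearMap.sub_apply, h w, sub_self]
    exact sub_eq_zero.mp (hnd _ h0)
  -- rearranged Leibniz identity
  have hbr' : ∀ x y z : E, br (br x y) z = br x (br y z) - br y (br x z) := by
    intro x y z
    rw [eq_sub_iff_add_eq, ← hbr]
  -- compatibility
  have hc : ∀ x y : E, lhd x y + rhd x y = br x y := by
    intro x y
    apply ext
    intro w
    rw [map_add, LinearMap.add_apply, hlhd, hrhd, hsym (br x y) w, hsymp x y w]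
    ring
  refine ⟨?_, ?_, ?_, hc⟩
  · -- first dendriform identity
    intro x y z
    have e1 : lhd (lhd x y) z + lhd (rhd x y) z = lhd (br x y) z := by
      rw [← hc x y, map_add, LinearMap.add_apply]
    have key : lhd (br x y) z = lhd x (lhd y z) - lhd y (lhd x z) := by
      apply ext
      intro w
      simp only [hlhd, hbr', map_sub, map_neg, neg_neg, neg_sub,
        LinearMap.sub_apply]
    have := e1.trans key
    -- this : lhd (lhd x y) z + lhd (rhd x y) z = lhd x (lhd y z) - lhd y (lhd x z)
    linear_combination (norm := abel) this
  · -- second dendriform identity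
    intro x y z
    have e2 : rhd y (lhd x z) + rhd y (rhd x z) = rhd y (br x z) := by
      rw [← hc x z, map_add]
    have key : lhd x (rhd y z) = rhd (lhd x y) z + rhd y (br x z) := by
      apply ext
      intro w
      simp only [hlhd, hrhd, hbr', map_sub, map_add, map_neg,
        LinearMap.sub_apply, LinearMap.add_apply]
      ring
    rw [key, ← e2]
    abel
  · -- third dendriform identity
    intro x y z
    have e3 : rhd x (lhd y z) + rhd x (rhd y z) = rhd x (br y z) := by
      rw [← hc y z, map_add]
    have key : rhd x (br y z) = rhd (rhd x y) z + lhd y (rhd x z) := by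
      apply ext
      intro w
      simp only [hlhd, hrhd, hbr', map_sub, map_add, map_neg,
        LinearMap.sub_apply, LinearMap.add_apply]
      ring
    have h4 := e3.trans key
    linear_combination (norm := abel) h4
end

section
/- Let $(\mathcal{L},\lhd,\rhd)$ be a Leibniz-dendriform algebra with sub-adjacent Leibniz algebra $(\mathcal{L},[\cdot,\cdot]_{\lhd,\rhd})$. Consider the semidirect product Leibniz algebra $\mathcal{L}\ltimes\mathcal{L}^*$ with bracket $[x+\xi,y+\eta] = [x,y]_{\lhd,\rhd} + L^*_{\lhd x}\eta - L^*_{\lhd y}\xi - R^*_{\rhd y}\xi$. Then the bilinear form $\mathcal{B}(x+\xi,y+\eta)=\langle x,\eta\rangle+\langle\xi,y\rangle$ is a symplectic structure on $\mathcal{L}\ltimes\mathcal{L}^*$, making it a phase space of $(\mathcal{L},[\cdot,\cdot]_{\lhd,\rhd})$. -/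
/-- The semidirect product L ⋉ L* of a Leibniz-dendriform algebra with the dual
of the representation (L; L_◁, R_▷), equipped with the canonical pairing, is a
symplectic Leibniz algebra which is a phase space of the sub-adjacent Leibniz
algebra. -/
theorem stmt7 {K L : Type*} [Field K] [AddCommGroup L] [Module K L]
    [FiniteDimensional K L]
    (lhd rhd : L →ₗ[K] L →ₗ[K] L)
    (h1 : ∀ x y z : L, lhd (lhd x y) z = lhd x (lhd y z) - lhd y (lhd x z) - lhd (rhd x y) z)
    (h2 : ∀ x y z : L, lhd x (rhd y z) = rhd (lhd x y) z + rhd y (lhd x z) + rhd y (rhd x z))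
    (h3 : ∀ x y z : L, rhd x (rhd y z) = rhd (rhd x y) z + lhd y (rhd x z) - rhd x (lhd y z))
    (Lstar Rstar : L → Module.Dual K L → Module.Dual K L)
    (hLstar : ∀ (x : L) (ξ : Module.Dual K L) (y : L), Lstar x ξ y = -(ξ (lhd x y)))
    (hRstar : ∀ (x : L) (ξ : Module.Dual K L) (y : L), Rstar x ξ y = -(ξ (rhd y x)))
    (br2 : (L × Module.Dual K L) → (L × Module.Dual K L) → (L × Module.Dual K L))
    (hbr2 : ∀ (x y : L) (ξ η : Module.Dual K L),
      br2 (x, ξ) (y, η) = (lhd x y + rhd x y, Lstar x η - Lstar y ξ - Rstar y ξ))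
    (B : (L × Module.Dual K L) → (L × Module.Dual K L) → K)
    (hB : ∀ (x y : L) (ξ η : Module.Dual K L), B (x, ξ) (y, η) = η x + ξ y) :
    -- the semidirect product is a Leibniz algebra
    (∀ a b c, br2 a (br2 b c) = br2 (br2 a b) c + br2 b (br2 a c)) ∧
    -- B is symmetric and nondegenerate
    (∀ a b, B a b = B b a) ∧
    (∀ a, (∀ b, B a b = 0) → a = 0) ∧
    -- B is a symplectic structure
    (∀ a b c, B c (br2 a b) = -B b (br2 a c) + B a (br2 b c) + B a (br2 c b)) ∧
    -- L and L* are subalgebras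
    (∀ x y : L, (br2 (x, 0) (y, 0)).2 = 0) ∧
    (∀ ξ η : Module.Dual K L, (br2 (0, ξ) (0, η)).1 = 0) := by
  refine ⟨?_, ?_, ?_, ?_, ?_, ?_⟩
  · -- Leibniz identity
    rintro ⟨x, ξ⟩ ⟨y, η⟩ ⟨z, ζ⟩
    simp only [hbr2, Prod.mk.injEq, Prod.mk_add_mk]
    constructor
    · -- first component
      simp only [map_add, LinearMap.add_apply]
      rw [h1 x y z, h2 x y z, h3 x y z]
      abel
    · -- second component
      ext w
      simp only [LinearMap.sub_apply, LinearMap.add_apply, hLstar, hRstar,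
        map_add, map_sub, map_neg]
      have e1 := congrArg ζ (h1 x y w)
      have e2 := congrArg η (h1 x z w)
      have e3 := congrArg η (h2 x w z)
      have e4 := congrArg ξ (h1 y z w)
      have e5 := congrArg ξ (h2 y w z)
      have e6 := congrArg ξ (h2 z w y)
      have e7 := congrArg ξ (h3 w z y)
      simp only [map_add, map_sub] at e1 e2 e3 e4 e5 e6 e7
      linear_combination e1 - e2 + e3 + e4 - e5 + e6 + e7
  · -- symmetry
    rintro ⟨x, ξ⟩ ⟨y, η⟩
    rw [hB, hB]; ring
  · -- nondegenerate
    rintro ⟨x, ξ⟩ h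
    have hx : x = 0 := by
      refine (Module.forall_dual_apply_eq_zero_iff K x).mp fun φ => ?_
      have := h (0, φ)
      rw [hB] at this
      simpa using this
    have hξ : ξ = 0 := by
      ext y
      have := h (y, 0)
      rw [hB] at this
      simpa using this
    simp [hx, hξ]
  · -- symplectic
    rintro ⟨x, ξ⟩ ⟨y, η⟩ ⟨z, ζ⟩
    rw [hbr2, hbr2, hbr2, hbr2, hB, hB, hB, hB]
    simp only [LinearMap.sub_apply, hLstar, hRstar, map_add]
    ring
  · -- L is a subalgebra
    intro x y
    rw [hbr2]
    show Lstar x 0 - Lstar y 0 - Rstar y 0 = 0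
    ext w
    simp [hLstar, hRstar]
  · -- L* is a subalgebra
    intro ξ η
    rw [hbr2]
    simp
end

section
/- A Leibniz algebra $(\mathcal{E},[\cdot,\cdot])$ admits a product structure $E$ if and only if $\mathcal{E}$ decomposes as a direct sum of vector spaces $\mathcal{E}=\mathcal{E}_+\oplus\mathcal{E}_-$, where $\mathcal{E}_+$ and $\mathcal{E}_-$ are Leibniz subalgebras (the eigenspaces of $E$ for eigenvalues $+1$ and $-1$). -/
/-!
An involution `P` splits the space into its `±1`-eigenspaces as soon as `2` is invertible, and
conversely a decomposition `E = p ⊕ q` yields the involution acting as `1` on `p` and as `-1`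
on `q`. The integrability condition is bilinear in `(x, y)`: for eigenvectors of opposite signs
it holds identically, while for two eigenvectors of the same sign `±1` it says exactly that
their bracket is again a `±1`-eigenvector.
-/

section Ring

variable {R E : Type*} [Ring R] [AddCommGroup E] [Module R E]

theorem Module.End.isCompl_ker_sub_one_ker_add_one [Invertible (2 : R)] {P : Module.End R E}
    (hP : P * P = 1) : IsCompl (LinearMap.ker (P - 1)) (LinearMap.ker (P + 1)) := by
  have hPP (x : E) : P (P x) = x := congr($hP x)
  constructor
  · refine Submodule.disjoint_def.mpr fun x hx₁ hx₂ => ?_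
    simp only [LinearMap.mem_ker, LinearMap.sub_apply, LinearMap.add_apply, Module.End.one_apply,
      sub_eq_zero, add_eq_zero_iff_eq_neg] at hx₁ hx₂
    have h2x : (2 : R) • x = 0 := by rw [two_smul, ← neg_add_cancel x, ← hx₂, hx₁]
    simpa using congr(⅟(2 : R) • $h2x)
  · refine Submodule.codisjoint_iff_exists_add_eq.mpr fun x =>
      ⟨⅟(2 : R) • (x + P x), ⅟(2 : R) • (x - P x), ?_, ?_, ?_⟩
    · simp [hPP, add_comm]
    · simp [hPP]
    · rw [← smul_add, add_add_sub_cancel, ← two_smul R, smul_smul, invOf_mul_self, one_smul]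

namespace Submodule

variable {p q : Submodule R E}

noncomputable def reflectionOfIsCompl (h : IsCompl p q) : Module.End R E :=
  LinearMap.ofIsCompl h p.subtype (-q.subtype)

theorem reflectionOfIsCompl_apply_of_mem_left (h : IsCompl p q) {x : E} (hx : x ∈ p) :
    reflectionOfIsCompl h x = x :=
  LinearMap.ofIsCompl_apply_left h ⟨x, hx⟩

theorem reflectionOfIsCompl_apply_of_mem_right (h : IsCompl p q) {x : E} (hx : x ∈ q) :
    reflectionOfIsCompl h x = -x :=
  LinearMap.ofIsCompl_apply_right h ⟨x, hx⟩

theorem reflectionOfIsCompl_mul_self (h : IsCompl p q) :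
    reflectionOfIsCompl h * reflectionOfIsCompl h = 1 := by
  ext x
  obtain ⟨a, b, rfl, -⟩ := existsUnique_add_of_isCompl h x
  simp [reflectionOfIsCompl]

end Submodule

end Ring

section Bracket

variable {R E : Type*} [CommRing R] [AddCommGroup E] [Module R E]

def IsIntegrable (br : E →ₗ[R] E →ₗ[R] E) (P : Module.End R E) : Prop :=
  ∀ x y, P (br x y) = br (P x) y + br x (P y) - P (br (P x) (P y))

def IsBracketClosed (br : E →ₗ[R] E →ₗ[R] E) (p : Submodule R E) : Prop :=
  ∀ x ∈ p, ∀ y ∈ p, br x y ∈ p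

variable {br : E →ₗ[R] E →ₗ[R] E} {P : Module.End R E}

theorem IsIntegrable.isBracketClosed_ker_sub_one [Invertible (2 : R)] (hP : IsIntegrable br P) :
    IsBracketClosed br (LinearMap.ker (P - 1)) := by
  intro x hx y hy
  simp only [LinearMap.mem_ker, LinearMap.sub_apply, Module.End.one_apply, sub_eq_zero] at hx hy ⊢
  have h := hP x y
  rw [hx, hy, eq_sub_iff_add_eq, ← two_smul R, ← two_smul R] at h
  exact (isUnit_of_invertible (2 : R)).smul_left_cancel.mp h

theorem IsIntegrable.isBracketClosed_ker_add_one [Invertible (2 : R)] (hP : IsIntegrable br P) :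
    IsBracketClosed br (LinearMap.ker (P + 1)) := by
  intro x hx y hy
  simp only [LinearMap.mem_ker, LinearMap.add_apply, Module.End.one_apply,
    add_eq_zero_iff_eq_neg] at hx hy ⊢
  have h := hP x y
  simp only [hx, hy, map_neg, LinearMap.neg_apply, neg_neg] at h
  rw [eq_sub_iff_add_eq, ← two_smul R, ← two_smul R] at h
  exact (isUnit_of_invertible (2 : R)).smul_left_cancel.mp h

theorem isIntegrable_of_codisjoint {p q : Submodule R E} (hpq : Codisjoint p q)
    (hPp : ∀ x ∈ p, P x = x) (hPq : ∀ x ∈ q, P x = -x)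
    (hp : IsBracketClosed br p) (hq : IsBracketClosed br q) : IsIntegrable br P := by
  intro x y
  obtain ⟨a, b, ha, hb, rfl⟩ := Submodule.codisjoint_iff_exists_add_eq.mp hpq x
  obtain ⟨c, d, hc, hd, rfl⟩ := Submodule.codisjoint_iff_exists_add_eq.mp hpq y
  simp only [map_add, LinearMap.add_apply, map_neg, LinearMap.neg_apply, hPp a ha, hPq b hb,
    hPp c hc, hPq d hd, hPp _ (hp a ha c hc), hPq _ (hq b hb d hd)]
  abel

end Bracket

theorem stmt8_general {K E : Type*} [Field K] [CharZero K] [AddCommGroup E] [Module K E]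
    (br : E →ₗ[K] E →ₗ[K] E) :
    (∃ P : Module.End K E, P * P = 1 ∧
      ∀ x y : E, P (br x y) = br (P x) y + br x (P y) - P (br (P x) (P y)))
    ↔ ∃ p q : Submodule K E, IsCompl p q ∧
        (∀ x ∈ p, ∀ y ∈ p, br x y ∈ p) ∧ (∀ x ∈ q, ∀ y ∈ q, br x y ∈ q) := by
  constructor
  · rintro ⟨P, hP, hI⟩
    have : Invertible (2 : K) := invertibleOfNonzero two_ne_zero
    exact ⟨_, _, Module.End.isCompl_ker_sub_one_ker_add_one hP,
      IsIntegrable.isBracketClosed_ker_sub_one hI, IsIntegrable.isBracketClosed_ker_add_one hI⟩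
  · rintro ⟨p, q, hpq, hp, hq⟩
    exact ⟨_, Submodule.reflectionOfIsCompl_mul_self hpq,
      isIntegrable_of_codisjoint hpq.codisjoint
        (fun _ => Submodule.reflectionOfIsCompl_apply_of_mem_left hpq)
        (fun _ => Submodule.reflectionOfIsCompl_apply_of_mem_right hpq) hp hq⟩

/-- A Leibniz algebra admits a product structure iff it decomposes as a direct
sum of two subalgebras. -/
theorem stmt8 {K E : Type*} [Field K] [CharZero K] [AddCommGroup E] [Module K E]
    (br : E →ₗ[K] E →ₗ[K] E)
    (hbr : ∀ x y z : E, br x (br y z) = br (br x y) z + br y (br x z)) :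
    (∃ P : Module.End K E, P * P = 1 ∧
      ∀ x y : E, P (br x y) = br (P x) y + br x (P y) - P (br (P x) (P y)))
    ↔ ∃ p q : Submodule K E, IsCompl p q ∧
        (∀ x ∈ p, ∀ y ∈ p, br x y ∈ p) ∧ (∀ x ∈ q, ∀ y ∈ q, br x y ∈ q) :=
  stmt8_general br
end

section
/- A Leibniz algebra $(\mathcal{E},[\cdot,\cdot])$ admits a strict product structure (an $E$ with $E^2=\mathrm{Id}$, $E[x,y]=[Ex,y]$ and $E[x,y]=[x,Ey]$ for all $x,y$) if and only if $\mathcal{E}=\mathcal{E}_+\oplus\mathcal{E}_-$ where $\mathcal{E}_+,\mathcal{E}_-$ are subalgebras with $[\mathcal{E}_+,\mathcal{E}_-]=[\mathcal{E}_-,\mathcal{E}_+]=0$, i.e. $\mathcal{E}$ is a direct sum of Leibniz algebras. -/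
/-!
An involution `P` with `2` invertible splits the space into its `±1`-eigenspaces, via
`x = ½ (x + P x) + ½ (x - P x)`; if `P` commutes with both slots of the bracket, each eigenspace
absorbs brackets with anything, so a bracket of a `+1`- and a `-1`-eigenvector lies in both
eigenspaces and vanishes. Conversely, a decomposition `p ⊕ q` gives the reflection `P = 1` on `p`,
`P = -1` on `q`, and bilinearity reduces `P [x, y] = [P x, y] = [x, P y]` to the four cases where
`x` and `y` each lie in `p` or `q`.
-/

open Module.End

namespace Module.End

variable {R M : Type*} [CommRing R] [AddCommGroup M] [Module R M] {P : Module.End R M}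

theorem isCompl_eigenspace_one_neg_one [Invertible (2 : R)] (hP : P * P = 1) :
    IsCompl (eigenspace P 1) (eigenspace P (-1)) := by
  have hPP (x : M) : P (P x) = x := congr($hP x)
  constructor
  · rw [Submodule.disjoint_def]
    intro x hx₁ hx₂
    rw [mem_eigenspace_iff] at hx₁ hx₂
    have h : (2 : R) • x = 0 := by linear_combination (norm := module) hx₂ - hx₁
    simpa using congr(⅟(2 : R) • $h)
  · rw [codisjoint_iff_le_sup]
    intro x _
    have hx : x = ⅟(2 : R) • (x + P x) + ⅟(2 : R) • (x - P x) := by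
      rw [← smul_add, add_add_sub_cancel, ← two_smul R, smul_smul, invOf_mul_self, one_smul]
    rw [hx]
    refine Submodule.add_mem_sup (Submodule.smul_mem _ _ ?_) (Submodule.smul_mem _ _ ?_)
    · simp [hPP, add_comm]
    · simp [hPP]

variable (br : M →ₗ[R] M →ₗ[R] M) {μ : R}

theorem bracket_mem_eigenspace_of_left (hL : ∀ x y, P (br x y) = br (P x) y) {x : M}
    (hx : x ∈ eigenspace P μ) (y : M) : br x y ∈ eigenspace P μ := by
  rw [mem_eigenspace_iff] at hx ⊢
  rw [hL, hx, map_smul, LinearMap.smul_apply]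

theorem bracket_mem_eigenspace_of_right (hR : ∀ x y, P (br x y) = br x (P y)) (x : M) {y : M}
    (hy : y ∈ eigenspace P μ) : br x y ∈ eigenspace P μ := by
  rw [mem_eigenspace_iff] at hy ⊢
  rw [hR, hy, map_smul]

end Module.End

namespace Submodule

section Ring

variable {R M : Type*} [Ring R] [AddCommGroup M] [Module R M] {p q : Submodule R M}

noncomputable def reflectionAlong (hpq : IsCompl p q) : Module.End R M :=
  p.projection q hpq - q.projection p hpq.symm

theorem reflectionAlong_apply_of_mem_left (hpq : IsCompl p q) {x : M} (hx : x ∈ p) :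
    reflectionAlong hpq x = x := by
  simp [reflectionAlong, projection_apply_of_mem_left hpq hx,
    projection_apply_of_mem_right hpq.symm hx]

theorem reflectionAlong_apply_of_mem_right (hpq : IsCompl p q) {x : M} (hx : x ∈ q) :
    reflectionAlong hpq x = -x := by
  simp [reflectionAlong, projection_apply_of_mem_left hpq.symm hx,
    projection_apply_of_mem_right hpq hx]

theorem exists_add_of_isCompl (hpq : IsCompl p q) (x : M) :
    ∃ a ∈ p, ∃ b ∈ q, a + b = x :=
  mem_sup.mp (hpq.sup_eq_top ▸ mem_top)

theorem reflectionAlong_mul_self (hpq : IsCompl p q) :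
    reflectionAlong hpq * reflectionAlong hpq = 1 := by
  ext x
  obtain ⟨a, ha, b, hb, rfl⟩ := exists_add_of_isCompl hpq x
  simp [map_add, reflectionAlong_apply_of_mem_left hpq ha,
    reflectionAlong_apply_of_mem_right hpq hb]

end Ring

section CommRing

variable {R M : Type*} [CommRing R] [AddCommGroup M] [Module R M] {p q : Submodule R M}
  (hpq : IsCompl p q) (br : M →ₗ[R] M →ₗ[R] M)
  (hp : ∀ x ∈ p, ∀ y ∈ p, br x y ∈ p) (hq : ∀ x ∈ q, ∀ y ∈ q, br x y ∈ q)
  (hz : ∀ x ∈ p, ∀ y ∈ q, br x y = 0 ∧ br y x = 0)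
include hp hq hz

theorem reflectionAlong_bracket (x y : M) :
    reflectionAlong hpq (br x y) = br (reflectionAlong hpq x) y ∧
      reflectionAlong hpq (br x y) = br x (reflectionAlong hpq y) := by
  obtain ⟨a, ha, b, hb, rfl⟩ := exists_add_of_isCompl hpq x
  obtain ⟨c, hc, d, hd, rfl⟩ := exists_add_of_isCompl hpq y
  have hσ {u : M} (hu : u ∈ p) : reflectionAlong hpq u = u :=
    reflectionAlong_apply_of_mem_left hpq hu
  have hτ {u : M} (hu : u ∈ q) : reflectionAlong hpq u = -u :=
    reflectionAlong_apply_of_mem_right hpq hu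
  simp [map_add, hσ ha, hσ hc, hτ hb, hτ hd, (hz a ha d hd).1, (hz c hc b hb).2,
    hσ (hp a ha c hc), hτ (hq b hb d hd)]

end CommRing

end Submodule

theorem stmt10_general {K E : Type*} [Field K] [CharZero K] [AddCommGroup E] [Module K E]
    (br : E →ₗ[K] E →ₗ[K] E) :
    (∃ P : Module.End K E, P * P = 1 ∧
      (∀ x y : E, P (br x y) = br (P x) y) ∧ (∀ x y : E, P (br x y) = br x (P y)))
    ↔ ∃ p q : Submodule K E, IsCompl p q ∧
        (∀ x ∈ p, ∀ y ∈ p, br x y ∈ p) ∧ (∀ x ∈ q, ∀ y ∈ q, br x y ∈ q) ∧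
        (∀ x ∈ p, ∀ y ∈ q, br x y = 0 ∧ br y x = 0) := by
  constructor
  · rintro ⟨P, hP, hL, hR⟩
    have hpq := isCompl_eigenspace_one_neg_one hP
    have hzero {x y : E} (hxy : br x y ∈ eigenspace P 1) (hxy' : br x y ∈ eigenspace P (-1)) :
        br x y = 0 :=
      Submodule.disjoint_def.mp hpq.disjoint _ hxy hxy'
    refine ⟨_, _, hpq, fun x hx y _ ↦ bracket_mem_eigenspace_of_left br hL hx y,
      fun x hx y _ ↦ bracket_mem_eigenspace_of_left br hL hx y, fun x hx y hy ↦ ⟨?_, ?_⟩⟩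
    · exact hzero (bracket_mem_eigenspace_of_left br hL hx y)
        (bracket_mem_eigenspace_of_right br hR x hy)
    · exact hzero (bracket_mem_eigenspace_of_right br hR y hx)
        (bracket_mem_eigenspace_of_left br hL hy x)
  · rintro ⟨p, q, hpq, hp, hq, hz⟩
    exact ⟨Submodule.reflectionAlong hpq, Submodule.reflectionAlong_mul_self hpq,
      fun x y ↦ (Submodule.reflectionAlong_bracket hpq br hp hq hz x y).1,
      fun x y ↦ (Submodule.reflectionAlong_bracket hpq br hp hq hz x y).2⟩

/-- A Leibniz algebra admits a strict product structure iff it is a direct sum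
of two Leibniz algebras. -/
theorem stmt10 {K E : Type*} [Field K] [CharZero K] [AddCommGroup E] [Module K E]
    (br : E →ₗ[K] E →ₗ[K] E)
    (hbr : ∀ x y z : E, br x (br y z) = br (br x y) z + br y (br x z)) :
    (∃ P : Module.End K E, P * P = 1 ∧
      (∀ x y : E, P (br x y) = br (P x) y) ∧ (∀ x y : E, P (br x y) = br x (P y)))
    ↔ ∃ p q : Submodule K E, IsCompl p q ∧
        (∀ x ∈ p, ∀ y ∈ p, br x y ∈ p) ∧ (∀ x ∈ q, ∀ y ∈ q, br x y ∈ q) ∧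
        (∀ x ∈ p, ∀ y ∈ q, br x y = 0 ∧ br y x = 0) :=
  stmt10_general br
end

section
/- Let $J$ be a complex structure on a real Leibniz algebra $(\mathcal{E},[\cdot,\cdot])$. Define $[x,y]_J = \tfrac{1}{2}([x,y]-[Jx,Jy])$. Then $(\mathcal{E},[\cdot,\cdot]_J)$ is a Leibniz algebra and $J$ is a strict complex structure on it, i.e. $J[x,y]_J = [Jx,y]_J = [x,Jy]_J$ for all $x,y$. -/
/-- For a complex structure J on a real Leibniz algebra, the bracket
[x,y]_J = ½([x,y] - [Jx,Jy]) is a Leibniz bracket and J is a strict complex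
structure on it. -/
theorem stmt13 {E : Type*} [AddCommGroup E] [Module ℝ E]
    (br : E →ₗ[ℝ] E →ₗ[ℝ] E)
    (hbr : ∀ x y z : E, br x (br y z) = br (br x y) z + br y (br x z))
    (J : Module.End ℝ E) (hJ2 : J * J = -1)
    (hJ : ∀ x y : E, J (br x y) = br (J x) y + br x (J y) + J (br (J x) (J y)))
    (brJ : E → E → E)
    (hbrJ : ∀ x y : E, brJ x y = (1/2 : ℝ) • (br x y - br (J x) (J y))) :
    (∀ x y z : E, brJ x (brJ y z) = brJ (brJ x y) z + brJ y (brJ x z)) ∧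
    (∀ x y : E, J (brJ x y) = brJ (J x) y) ∧
    (∀ x y : E, J (brJ x y) = brJ x (J y)) := by
  have hJJ : ∀ x : E, J (J x) = -x := by
    intro x
    have := DFunLike.congr_fun hJ2 x
    simpa [Module.End.mul_apply] using this
  have hK : ∀ x y : E, J (br x y - br (J x) (J y)) = br (J x) y + br x (J y) := by
    intro x y
    rw [map_sub, hJ]
    abel
  refine ⟨?_, ?_, ?_⟩
  · intro x y z
    simp only [hbrJ, map_smul, hK]
    simp only [map_sub, map_add, map_smul, LinearMap.sub_apply, LinearMap.add_apply,
      LinearMap.smul_apply, smul_sub, smul_add]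
    rw [hbr x y z, hbr x (J y) (J z), hbr (J x) (J y) z, hbr (J x) y (J z)]
    module
  · intro x y
    simp only [hbrJ, map_smul, hK, hJJ, map_neg, LinearMap.neg_apply]
    module
  · intro x y
    simp only [hbrJ, map_smul, hK, hJJ, map_neg]
    module
end

section
/- Let $(\mathcal{E},[\cdot,\cdot],\mathcal{B})$ be a symplectic Leibniz algebra. Then there exists a paracomplex structure $E$ such that $(\mathcal{E},\mathcal{B},E)$ is a para-Kähler Leibniz algebra if and only if $\mathcal{E} = \mathcal{E}_+\oplus\mathcal{E}_-$ as vector spaces, where $\mathcal{E}_+$ and $\mathcal{E}_-$ are Leibniz subalgebras that are isotropic with respect to $\mathcal{B}$. -/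
/-!
When `2` is invertible, the `±1`-eigenspaces of an involution `P` are complementary. On an
eigenspace the product condition reads `2 • P [x, y] = ± 2 • [x, y]` and the compatibility
`B (P x) (P y) = -B x y` reads `B x y = -B x y`, so both eigenspaces are isotropic subalgebras.
Conversely, for a splitting `p ⊕ q` into isotropic subalgebras, the involution that is `1` on `p`
and `-1` on `q` satisfies both identities by bilinear expansion; and complementary isotropic
subspaces of a nondegenerate form have equal dimension, since `B` embeds each of them into the
dual of the other.
-/

open Module Module.End

section Involution

variable {R M : Type*} [CommRing R] [AddCommGroup M] [Module R M]

theorem Module.End.eigenspace_one_eq_ker (P : End R M) :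
    P.eigenspace 1 = LinearMap.ker (P - 1) := by
  rw [eigenspace_def, one_smul]

theorem Module.End.eigenspace_neg_one_eq_ker (P : End R M) :
    P.eigenspace (-1) = LinearMap.ker (P + 1) := by
  rw [eigenspace_def, neg_one_smul, sub_neg_eq_add]

variable [Invertible (2 : R)]

theorem eq_of_two_smul_eq_two_smul {u v : M} (h : (2 : R) • u = (2 : R) • v) : u = v :=
  (isUnit_of_invertible (2 : R)).smul_left_cancel.mp h

theorem Module.End.isCompl_eigenspace_one_neg_one_s16 {P : End R M} (hP : P * P = 1) :
    IsCompl (P.eigenspace 1) (P.eigenspace (-1)) := by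
  have hPP : ∀ x, P (P x) = x := fun x => congr($hP x)
  constructor
  · rw [Submodule.disjoint_def]
    intro x h₁ h₂
    rw [mem_eigenspace_iff] at h₁ h₂
    refine eq_of_two_smul_eq_two_smul (R := R) ?_
    rw [smul_zero, two_smul]
    nth_rw 2 [← one_smul R x]
    rw [← h₁, h₂, neg_smul, one_smul, add_neg_cancel]
  · rw [Submodule.codisjoint_iff_exists_add_eq]
    intro x
    refine ⟨(⅟2 : R) • (x + P x), (⅟2 : R) • (x - P x), ?_, ?_, ?_⟩
    · rw [mem_eigenspace_iff, map_smul, map_add, hPP, one_smul, add_comm]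
    · rw [mem_eigenspace_iff, map_smul, map_sub, hPP, neg_one_smul, ← smul_neg, neg_sub]
    · rw [← smul_add, add_add_sub_cancel, ← two_smul R, smul_smul, invOf_mul_self, one_smul]

theorem Module.End.bracket_mem_eigenspace {P : End R M} (br : M →ₗ[R] M →ₗ[R] M)
    (hbr : ∀ x y, P (br x y) = br (P x) y + br x (P y) - P (br (P x) (P y)))
    {ε : R} (hε : ε * ε = 1) {x y : M} (hx : x ∈ P.eigenspace ε) (hy : y ∈ P.eigenspace ε) :
    br x y ∈ P.eigenspace ε := by
  rw [mem_eigenspace_iff] at hx hy ⊢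
  have h := hbr x y
  simp only [hx, hy, map_smul, LinearMap.smul_apply, smul_smul, hε, one_smul] at h
  refine eq_of_two_smul_eq_two_smul (R := R) ?_
  rw [two_smul, two_smul]
  nth_rw 1 [h]
  abel

theorem Module.End.bilin_eq_zero_of_mem_eigenspace {N : Type*} [AddCommGroup N] [Module R N]
    {P : End R M} (B : M →ₗ[R] M →ₗ[R] N) (hB : ∀ x y, B (P x) (P y) = -B x y)
    {ε : R} (hε : ε * ε = 1) {x y : M} (hx : x ∈ P.eigenspace ε) (hy : y ∈ P.eigenspace ε) :
    B x y = 0 := by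
  rw [mem_eigenspace_iff] at hx hy
  have h := hB x y
  simp only [hx, hy, map_smul, LinearMap.smul_apply, smul_smul, hε, one_smul] at h
  refine eq_of_two_smul_eq_two_smul (R := R) ?_
  rw [smul_zero, two_smul]
  nth_rw 1 [h]
  exact neg_add_cancel _

end Involution

section Splitting

variable {R M : Type*} [CommRing R] [AddCommGroup M] [Module R M] {p q : Submodule R M}

noncomputable def involutionOfIsCompl (h : IsCompl p q) : End R M :=
  LinearMap.ofIsCompl h p.subtype (-q.subtype)

theorem involutionOfIsCompl_of_mem_left (h : IsCompl p q) {a : M} (ha : a ∈ p) :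
    involutionOfIsCompl h a = a :=
  LinearMap.ofIsCompl_apply_left h ⟨a, ha⟩

theorem involutionOfIsCompl_of_mem_right (h : IsCompl p q) {b : M} (hb : b ∈ q) :
    involutionOfIsCompl h b = -b :=
  LinearMap.ofIsCompl_apply_right h ⟨b, hb⟩

theorem involutionOfIsCompl_add (h : IsCompl p q) {a b : M} (ha : a ∈ p) (hb : b ∈ q) :
    involutionOfIsCompl h (a + b) = a - b := by
  rw [map_add, involutionOfIsCompl_of_mem_left h ha, involutionOfIsCompl_of_mem_right h hb,
    sub_eq_add_neg]

theorem involutionOfIsCompl_mul_self (h : IsCompl p q) :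
    involutionOfIsCompl h * involutionOfIsCompl h = 1 := by
  ext x
  obtain ⟨a, b, ha, hb, rfl⟩ := Submodule.codisjoint_iff_exists_add_eq.mp h.codisjoint x
  rw [Module.End.mul_apply, involutionOfIsCompl_add h ha hb, sub_eq_add_neg,
    involutionOfIsCompl_add h ha (q.neg_mem hb), sub_neg_eq_add, Module.End.one_apply]

theorem involutionOfIsCompl_bracket (h : IsCompl p q) (br : M →ₗ[R] M →ₗ[R] M)
    (hp : ∀ x ∈ p, ∀ y ∈ p, br x y ∈ p) (hq : ∀ x ∈ q, ∀ y ∈ q, br x y ∈ q) (x y : M) :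
    involutionOfIsCompl h (br x y) =
      br (involutionOfIsCompl h x) y + br x (involutionOfIsCompl h y) -
        involutionOfIsCompl h (br (involutionOfIsCompl h x) (involutionOfIsCompl h y)) := by
  obtain ⟨a, b, ha, hb, rfl⟩ := Submodule.codisjoint_iff_exists_add_eq.mp h.codisjoint x
  obtain ⟨c, d, hc, hd, rfl⟩ := Submodule.codisjoint_iff_exists_add_eq.mp h.codisjoint y
  simp only [involutionOfIsCompl_add h ha hb, involutionOfIsCompl_add h hc hd, map_add, map_sub,
    LinearMap.add_apply, LinearMap.sub_apply, involutionOfIsCompl_of_mem_left h (hp a ha c hc),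
    involutionOfIsCompl_of_mem_right h (hq b hb d hd)]
  abel

theorem bilin_involutionOfIsCompl_apply {N : Type*} [AddCommGroup N] [Module R N]
    (h : IsCompl p q) (B : M →ₗ[R] M →ₗ[R] N)
    (hp : ∀ x ∈ p, ∀ y ∈ p, B x y = 0) (hq : ∀ x ∈ q, ∀ y ∈ q, B x y = 0) (x y : M) :
    B (involutionOfIsCompl h x) (involutionOfIsCompl h y) = -B x y := by
  obtain ⟨a, b, ha, hb, rfl⟩ := Submodule.codisjoint_iff_exists_add_eq.mp h.codisjoint x
  obtain ⟨c, d, hc, hd, rfl⟩ := Submodule.codisjoint_iff_exists_add_eq.mp h.codisjoint y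
  simp only [involutionOfIsCompl_add h ha hb, involutionOfIsCompl_add h hc hd, map_add, map_sub,
    LinearMap.add_apply, LinearMap.sub_apply, hp a ha c hc, hq b hb d hd]
  abel

variable [Invertible (2 : R)]

theorem eigenspace_involutionOfIsCompl_one (h : IsCompl p q) :
    (involutionOfIsCompl h).eigenspace 1 = p := by
  have hE := isCompl_eigenspace_one_neg_one_s16 (involutionOfIsCompl_mul_self h)
  refine ((le_iff_eq_of_codisjoint_of_disjoint h.codisjoint ?_).mp ?_).symm
  · refine hE.disjoint.symm.mono_left fun b hb => ?_
    rw [mem_eigenspace_iff, involutionOfIsCompl_of_mem_right h hb, neg_one_smul]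
  · intro a ha
    rw [mem_eigenspace_iff, involutionOfIsCompl_of_mem_left h ha, one_smul]

theorem eigenspace_involutionOfIsCompl_neg_one (h : IsCompl p q) :
    (involutionOfIsCompl h).eigenspace (-1) = q := by
  have hE := isCompl_eigenspace_one_neg_one_s16 (involutionOfIsCompl_mul_self h)
  refine ((le_iff_eq_of_codisjoint_of_disjoint h.codisjoint.symm ?_).mp ?_).symm
  · refine hE.disjoint.mono_left fun a ha => ?_
    rw [mem_eigenspace_iff, involutionOfIsCompl_of_mem_left h ha, one_smul]
  · intro b hb
    rw [mem_eigenspace_iff, involutionOfIsCompl_of_mem_right h hb, neg_one_smul]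

end Splitting

theorem Submodule.finrank_le_finrank_of_isCompl_of_isotropic {K V : Type*} [Field K]
    [AddCommGroup V] [Module K V] [FiniteDimensional K V] {B : V →ₗ[K] V →ₗ[K] K}
    (hB : B.SeparatingLeft) {p q : Submodule K V} (h : IsCompl p q)
    (hp : ∀ x ∈ p, ∀ y ∈ p, B x y = 0) : finrank K p ≤ finrank K q := by
  have hinj : Function.Injective (B.domRestrict₁₂ p q) := by
    rw [← LinearMap.ker_eq_bot, LinearMap.ker_eq_bot']
    intro a ha
    refine Subtype.ext (hB a fun y => ?_)
    obtain ⟨c, d, hc, hd, rfl⟩ := Submodule.codisjoint_iff_exists_add_eq.mp h.codisjoint y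
    rw [map_add, hp a a.2 c hc, zero_add]
    exact congr($ha ⟨d, hd⟩)
  calc finrank K p ≤ finrank K (Dual K q) := LinearMap.finrank_le_finrank_of_injective hinj
    _ = finrank K q := Subspace.dual_finrank_eq

theorem stmt16_general {K E : Type*} [Field K] [CharZero K] [AddCommGroup E] [Module K E]
    [FiniteDimensional K E]
    (br : E →ₗ[K] E →ₗ[K] E)
    (B : E →ₗ[K] E →ₗ[K] K)
    (hnd : ∀ x : E, (∀ y : E, B x y = 0) → x = 0) :
    (∃ P : Module.End K E, P * P = 1 ∧
      (∀ x y : E, P (br x y) = br (P x) y + br x (P y) - P (br (P x) (P y))) ∧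
      Module.finrank K (LinearMap.ker (P - 1)) = Module.finrank K (LinearMap.ker (P + 1)) ∧
      (∀ x y : E, B (P x) (P y) = -B x y))
    ↔ ∃ p q : Submodule K E, IsCompl p q ∧
        (∀ x ∈ p, ∀ y ∈ p, br x y ∈ p) ∧ (∀ x ∈ q, ∀ y ∈ q, br x y ∈ q) ∧
        (∀ x ∈ p, ∀ y ∈ p, B x y = 0) ∧ (∀ x ∈ q, ∀ y ∈ q, B x y = 0) := by
  have hsq : (-1 : K) * -1 = 1 := by norm_num
  constructor
  · rintro ⟨P, hP, hbr, -, hB⟩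
    exact ⟨_, _, isCompl_eigenspace_one_neg_one_s16 hP,
      fun x hx y hy => P.bracket_mem_eigenspace br hbr (one_mul 1) hx hy,
      fun x hx y hy => P.bracket_mem_eigenspace br hbr hsq hx hy,
      fun x hx y hy => P.bilin_eq_zero_of_mem_eigenspace B hB (one_mul 1) hx hy,
      fun x hx y hy => P.bilin_eq_zero_of_mem_eigenspace B hB hsq hx hy⟩
  · rintro ⟨p, q, h, hp, hq, hBp, hBq⟩
    refine ⟨involutionOfIsCompl h, involutionOfIsCompl_mul_self h,
      involutionOfIsCompl_bracket h br hp hq, ?_, bilin_involutionOfIsCompl_apply h B hBp hBq⟩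
    rw [← eigenspace_one_eq_ker, ← eigenspace_neg_one_eq_ker,
      eigenspace_involutionOfIsCompl_one, eigenspace_involutionOfIsCompl_neg_one]
    exact le_antisymm (Submodule.finrank_le_finrank_of_isCompl_of_isotropic hnd h hBp)
      (Submodule.finrank_le_finrank_of_isCompl_of_isotropic hnd h.symm hBq)

/-- A symplectic Leibniz algebra admits a paracomplex structure making it
para-Kähler iff it is the direct sum of two isotropic subalgebras. -/
theorem stmt16 {K E : Type*} [Field K] [CharZero K] [AddCommGroup E] [Module K E]
    [FiniteDimensional K E]
    (br : E →ₗ[K] E →ₗ[K] E)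
    (hbr : ∀ x y z : E, br x (br y z) = br (br x y) z + br y (br x z))
    (B : E →ₗ[K] E →ₗ[K] K)
    (hsym : ∀ x y : E, B x y = B y x)
    (hnd : ∀ x : E, (∀ y : E, B x y = 0) → x = 0)
    (hsymp : ∀ x y z : E, B z (br x y) = -B y (br x z) + B x (br y z) + B x (br z y)) :
    (∃ P : Module.End K E, P * P = 1 ∧
      (∀ x y : E, P (br x y) = br (P x) y + br x (P y) - P (br (P x) (P y))) ∧
      Module.finrank K (LinearMap.ker (P - 1)) = Module.finrank K (LinearMap.ker (P + 1)) ∧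
      (∀ x y : E, B (P x) (P y) = -B x y))
    ↔ ∃ p q : Submodule K E, IsCompl p q ∧
        (∀ x ∈ p, ∀ y ∈ p, br x y ∈ p) ∧ (∀ x ∈ q, ∀ y ∈ q, br x y ∈ q) ∧
        (∀ x ∈ p, ∀ y ∈ p, B x y = 0) ∧ (∀ x ∈ q, ∀ y ∈ q, B x y = 0) :=
  stmt16_general br B hnd
end

section
/- Let $\mathcal{E}$ be a complex Leibniz algebra and $E:\mathcal{E}\to\mathcal{E}$ a complex-linear map. Then $E$ is a product structure on $\mathcal{E}$ (i.e. $E^2=\mathrm{Id}$ and $E[x,y]=[Ex,y]+[x,Ey]-E[Ex,Ey]$) if and only if $J=iE$ is a complex structure on $\mathcal{E}$ (i.e. $J^2=-\mathrm{Id}$ and $J[x,y]=[Jx,y]+[x,Jy]+J[Jx,Jy]$). -/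
/-- On a complex Leibniz algebra, E is a product structure iff J = iE is a
complex structure. -/
theorem stmt19 {E : Type*} [AddCommGroup E] [Module ℂ E]
    (br : E →ₗ[ℂ] E →ₗ[ℂ] E)
    (hbr : ∀ x y z : E, br x (br y z) = br (br x y) z + br y (br x z))
    (P J : Module.End ℂ E) (hJ : ∀ x : E, J x = Complex.I • P x) :
    (P * P = 1 ∧
      ∀ x y : E, P (br x y) = br (P x) y + br x (P y) - P (br (P x) (P y))) ↔
    (J * J = -1 ∧
      ∀ x y : E, J (br x y) = br (J x) y + br x (J y) + J (br (J x) (J y))) := by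
  have hJJ : ∀ x : E, J (J x) = -(P (P x)) := by
    intro x
    rw [hJ, hJ, map_smul, smul_smul, Complex.I_mul_I, neg_one_smul]
  constructor
  · rintro ⟨h1, h2⟩
    constructor
    · ext x
      have := congrArg (fun f : Module.End ℂ E => f x) h1
      simp only [Module.End.mul_apply, Module.End.one_apply] at this
      simp only [Module.End.mul_apply, LinearMap.neg_apply, Module.End.one_apply, hJJ, this]
    · intro x y
      have h := congrArg (fun v => Complex.I • v) (h2 x y)
      simp only [smul_sub, smul_add] at h
      simp only [hJ, map_smul, LinearMap.smul_apply, smul_smul, Complex.I_mul_I,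
        neg_one_smul, map_neg, smul_neg]
      rw [h]; abel
  · rintro ⟨h1, h2⟩
    constructor
    · ext x
      have := congrArg (fun f : Module.End ℂ E => f x) h1
      simp only [Module.End.mul_apply, LinearMap.neg_apply, Module.End.one_apply, hJJ] at this
      simpa [Module.End.mul_apply] using neg_injective this
    · intro x y
      have h := h2 x y
      simp only [hJ, map_smul, LinearMap.smul_apply, smul_smul, Complex.I_mul_I,
        neg_one_smul, map_neg, smul_neg] at h
      have h' := congrArg (fun v => (-Complex.I) • v) h
      simp only [smul_add, smul_neg, smul_smul, neg_mul, Complex.I_mul_I, neg_neg,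
        one_smul] at h'
      rw [h']; abel
end
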